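/- Consider the simplified coevolutionary model (A = W, α = 0, γ = 0) with homogeneous λ, β ∈ (0,1) and W nonnegative row-stochastic. Suppose the state z(t) = (x(t), y(t)) is polarized with respect to a partition (V_p, V_n), and suppose Σ_{j∈V_p} w_{ij} > (1/2)(1 + β(1-λ)/(1-βλ)) for every i ∈ V_p and Σ_{j∈V_n} w_{ij} > (1/2)(1 + β(1-λ)/(1-βλ)) for every i ∈ V_n. Then for every i ∈ V_p one has δ_i(z(t)) > 0, and for every i ∈ V_n one has δ_i(z(t)) < 0; consequently, whichever agent is active at time t does not change its action and x(t+1) = x(t) remains polarized with respect to (V_p, V_n). -/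
import Mathlib


open Finset Matrix Filter

/-- The quantity `δ_i(z)` in the simplified model (`A = W`, `α = 0`, `γ = 0`). -/
noncomputable def sDelta {n : ℕ} (w : Fin n → Fin n → ℝ) (lam β : ℝ)
    (x y : Fin n → ℝ) (i : Fin n) : ℝ :=
  2 * lam * β * (1 - lam) * (∑ j, w i j * y j) + (1 - β) * lam * (∑ j, w i j * x j)

/-- `S(d; x_i)`: `+1` if `d > 0`, `-1` if `d < 0`, and `x_i` if `d = 0`. -/
noncomputable def brS (d xi : ℝ) : ℝ := if 0 < d then 1 else if d < 0 then -1 else xi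

/-- A state `(x, y)` is an equilibrium of the simplified coevolutionary model if applying
the update rule to any agent leaves the state unchanged. -/
noncomputable def isEquilibrium {n : ℕ} (w : Fin n → Fin n → ℝ) (lam β : ℝ)
    (x y : Fin n → ℝ) : Prop :=
  ∀ i, brS (sDelta w lam β x y i) (x i) = x i ∧
    (1 - lam) * (∑ j, w i j * y j) + lam * brS (sDelta w lam β x y i) (x i) = y i

/-- A state `(x, y)` is polarized with respect to the partition `(Vp, Vn)`. -/
def Polarized {n : ℕ} (Vp Vn : Finset (Fin n)) (x y : Fin n → ℝ) : Prop :=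
  (∀ i ∈ Vp, x i = 1 ∧ 0 < y i) ∧ (∀ i ∈ Vn, x i = -1 ∧ y i < 0)

/-- A nonnegative matrix (given as a function) is irreducible if for every pair of indices
some power of the matrix has a positive entry there. -/
def FunIrreducible {n : ℕ} (W : Fin n → Fin n → ℝ) : Prop :=
  ∀ i j, ∃ k : ℕ, 0 < ((Matrix.of W) ^ k) i j

theorem stmt15 {n : ℕ} (hn : 2 ≤ n) (w : Fin n → Fin n → ℝ) (lam β : ℝ)
    (hw : ∀ i j, 0 ≤ w i j) (hwrow : ∀ i, ∑ j, w i j = 1)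
    (hlam : lam ∈ Set.Ioo (0 : ℝ) 1) (hβ : β ∈ Set.Ioo (0 : ℝ) 1)
    -- a partition of the agents into two nonempty disjoint sets
    (Vp Vn : Finset (Fin n)) (hdisj : Disjoint Vp Vn) (hunion : Vp ∪ Vn = Finset.univ)
    (hVp : Vp.Nonempty) (hVn : Vn.Nonempty)
    -- the current state `z(t) = (x, y)`, polarized with respect to `(Vp, Vn)`
    (x y : Fin n → ℝ) (hy : ∀ i, y i ∈ Set.Icc (-1 : ℝ) 1)
    (hpol : Polarized Vp Vn x y)
    -- the in-group weight condition
    (hcp : ∀ i ∈ Vp, (∑ j ∈ Vp, w i j) > 1 / 2 * (1 + β * (1 - lam) / (1 - β * lam)))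
    (hcn : ∀ i ∈ Vn, (∑ j ∈ Vn, w i j) > 1 / 2 * (1 + β * (1 - lam) / (1 - β * lam))) :
    (∀ i ∈ Vp, 0 < sDelta w lam β x y i) ∧
    (∀ i ∈ Vn, sDelta w lam β x y i < 0) ∧
    (∀ i, brS (sDelta w lam β x y i) (x i) = x i) := by

  obtain ⟨hlam0, hlam1⟩ := hlam
  obtain ⟨hβ0, hβ1⟩ := hβ
  obtain ⟨hpolp, hpoln⟩ := hpol
  have hbl : (0:ℝ) < 1 - β * lam := by nlinarith
  have key : ∀ (Vp Vn : Finset (Fin n)), Disjoint Vp Vn → Vp ∪ Vn = Finset.univ →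
      ∀ (x y : Fin n → ℝ), (∀ j, -1 ≤ y j) →
      (∀ i ∈ Vp, x i = 1 ∧ 0 < y i) → (∀ i ∈ Vn, x i = -1) →
      (∀ i ∈ Vp, (∑ j ∈ Vp, w i j) > 1 / 2 * (1 + β * (1 - lam) / (1 - β * lam))) →
      ∀ i ∈ Vp, 0 < sDelta w lam β x y i := by
    intro Vp Vn hdisj hunion x y hy hxp hxn hcp i hi
    have hsplit : ∀ f : Fin n → ℝ, ∑ j, f j = ∑ j ∈ Vp, f j + ∑ j ∈ Vn, f j := by
      intro f; rw [← Finset.sum_union hdisj, hunion]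
    set p := ∑ j ∈ Vp, w i j with hp
    have hpn : ∑ j ∈ Vn, w i j = 1 - p := by
      have h := hwrow i; rw [hsplit] at h; linarith
    have hx : ∑ j, w i j * x j = 2 * p - 1 := by
      rw [hsplit]
      have h1 : ∑ j ∈ Vp, w i j * x j = p := by
        rw [hp]; apply Finset.sum_congr rfl; intro j hj; rw [(hxp j hj).1, mul_one]
      have h2 : ∑ j ∈ Vn, w i j * x j = -(1 - p) := by
        rw [← hpn, ← Finset.sum_neg_distrib]
        apply Finset.sum_congr rfl; intro j hj; rw [hxn j hj]; ring
      rw [h1, h2]; ring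
    have hy1 : (0:ℝ) ≤ ∑ j ∈ Vp, w i j * y j := by
      apply Finset.sum_nonneg; intro j hj
      exact mul_nonneg (hw i j) (hxp j hj).2.le
    have hy2 : -(1 - p) ≤ ∑ j ∈ Vn, w i j * y j := by
      rw [← hpn, ← Finset.sum_neg_distrib]
      apply Finset.sum_le_sum; intro j hj
      have := hy j
      nlinarith [hw i j]
    have hSy : p - 1 ≤ ∑ j, w i j * y j := by
      rw [hsplit]; linarith
    have hc := hcp i hi
    have hdiv : β * (1 - lam) / (1 - β * lam) * (1 - β * lam) = β * (1 - lam) :=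
      div_mul_cancel₀ _ (ne_of_gt hbl)
    have hc2 : 2 * p * (1 - β * lam) > (1 - β * lam) + β * (1 - lam) := by
      nlinarith [mul_lt_mul_of_pos_right hc hbl]
    rw [sDelta, hx]
    have hco : (0:ℝ) < 2 * lam * β * (1 - lam) :=
      mul_pos (mul_pos (mul_pos two_pos hlam0) hβ0) (by linarith)
    nlinarith [mul_le_mul_of_nonneg_left hSy hco.le, mul_pos hlam0 (by nlinarith : (0:ℝ) < 2 * p * (1 - β * lam) - (1 - β * lam) - β * (1 - lam))]
  have hkp : ∀ i ∈ Vp, 0 < sDelta w lam β x y i :=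
    key Vp Vn hdisj hunion x y (fun j => (hy j).1) hpolp (fun i hi => (hpoln i hi).1) hcp
  have hneg : ∀ i, sDelta w lam β (fun j => -x j) (fun j => -y j) i = - sDelta w lam β x y i := by
    intro i; simp only [sDelta, mul_neg, Finset.sum_neg_distrib]; ring
  have hkn : ∀ i ∈ Vn, sDelta w lam β x y i < 0 := by
    intro i hi
    have h := key Vn Vp hdisj.symm (by rw [Finset.union_comm]; exact hunion)
      (fun j => -x j) (fun j => -y j)
      (fun j => by show (-1:ℝ) ≤ -y j; linarith [(hy j).2])
      (fun i hi => ⟨by show -x i = 1; rw [(hpoln i hi).1]; ring,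
        by show (0:ℝ) < -y i; linarith [(hpoln i hi).2]⟩)
      (fun i hi => by show -x i = -1; rw [(hpolp i hi).1]) hcn i hi
    rw [hneg] at h; linarith
  refine ⟨hkp, hkn, fun i => ?_⟩
  have hiu : i ∈ Vp ∪ Vn := by rw [hunion]; exact Finset.mem_univ i
  rcases Finset.mem_union.1 hiu with hi | hi
  · rw [brS, if_pos (hkp i hi), (hpolp i hi).1]
  · rw [brS, if_neg (by linarith [hkn i hi]), if_pos (hkn i hi), (hpoln i hi).1]
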